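/- Let p be an odd prime and r a positive integer. Then Σ_{i+j+k=2p^r, i,j,k∈𝒫_p} (−1)^i/(ijk) ≡ 2 · Σ_{i+j+k=p^r, i,j,k∈𝒫_p} (−1)^i/(ijk) (mod p^r), where each sum is over triples of positive integers with the indicated sum and all entries coprime to p. -/

import Mathlib

/-!
Write `N = p ^ r`. A triple with entries prime to `p` and sum `2N` has no entry equal to `N`,
so either exactly one entry exceeds `N`, and subtracting `N` from it leaves a triple with
sum `N`, or all entries are below `N` and `(N - i, N - j, N - k)` has sum `N`. The sum over
`2N` thus becomes a sum over the triples `(a, b, c)` with sum `N` of four terms. Modulo `p ^ r`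
we have `(N + a) b c ≡ a b c` and `(N - a)(N - b)(N - c) ≡ -a b c`, and `N` odd gives
`(-1) ^ (N ± a) = -(-1) ^ a`, so the four terms are `≡ -1, 1, 1, 1` times `(-1) ^ a / (a b c)`.
-/

/-- `x ≡ y (mod p^s)` for rational numbers: either `x = y` or the `p`-adic
valuation of `x - y` is at least `s`. -/
def RatCongr (p : ℕ) (s : ℕ) (x y : ℚ) : Prop :=
  x = y ∨ (s : ℤ) ≤ padicValRat p (x - y)

namespace RatCongr

variable {p r : ℕ} {x y z : ℚ}

theorem refl (x : ℚ) : RatCongr p r x x := Or.inl rfl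

variable [hp : Fact p.Prime]

theorem iff_padicNorm_le :
    RatCongr p r x y ↔ padicNorm p (x - y) ≤ (p : ℚ) ^ (-(r : ℤ)) := by
  rcases eq_or_ne x y with rfl | hxy
  · simp [refl]
  · have hp1 : (1 : ℚ) < p := mod_cast hp.out.one_lt
    rw [RatCongr, or_iff_right hxy, padicNorm.eq_zpow_of_nonzero (sub_ne_zero.2 hxy),
      zpow_le_zpow_iff_right₀ hp1, neg_le_neg_iff]

theorem trans (hxy : RatCongr p r x y) (hyz : RatCongr p r y z) : RatCongr p r x z := by
  rw [iff_padicNorm_le] at *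
  rw [← sub_add_sub_cancel x y z]
  exact padicNorm.nonarchimedean.trans (max_le hxy hyz)

theorem add {x' y' : ℚ} (hx : RatCongr p r x x') (hy : RatCongr p r y y') :
    RatCongr p r (x + y) (x' + y') := by
  rw [iff_padicNorm_le] at *
  rw [add_sub_add_comm]
  exact padicNorm.nonarchimedean.trans (max_le hx hy)

theorem sum {ι : Type*} (s : Finset ι) {f g : ι → ℚ}
    (h : ∀ i ∈ s, RatCongr p r (f i) (g i)) :
    RatCongr p r (∑ i ∈ s, f i) (∑ i ∈ s, g i) := by
  simp only [iff_padicNorm_le, ← Finset.sum_sub_distrib] at *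
  exact padicNorm.sum_le' h (by positivity)

theorem mul_left (h : RatCongr p r x y) (hz : padicNorm p z ≤ 1) :
    RatCongr p r (z * x) (z * y) := by
  rw [iff_padicNorm_le] at *
  rw [← mul_sub, padicNorm.mul]
  exact (mul_le_of_le_one_left (padicNorm.nonneg _) hz).trans h

theorem of_sub_eq_pow_mul (n : ℤ) (h : x - y = (p : ℚ) ^ r * n) : RatCongr p r x y := by
  rw [iff_padicNorm_le, h]
  exact_mod_cast padicNorm.dvd_iff_norm_le.1 (dvd_mul_right _ n)

theorem inv (hr : 0 < r) (h : RatCongr p r x y) (hy : padicNorm p y = 1) :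
    RatCongr p r x⁻¹ y⁻¹ := by
  rw [iff_padicNorm_le] at *
  have hlt : padicNorm p (x - y) < padicNorm p y := by
    exact hy ▸ h.trans_lt (zpow_lt_one_of_neg₀ (mod_cast hp.out.one_lt) (by omega))
  have hx : padicNorm p x = 1 := by
    rw [← sub_add_cancel x y, padicNorm.add_eq_max_of_ne hlt.ne, max_eq_right hlt.le, hy]
  have hx0 : x ≠ 0 := fun h0 => by simp [h0] at hx
  have hy0 : y ≠ 0 := fun h0 => by simp [h0] at hy
  rwa [inv_sub_inv hx0 hy0, padicNorm.div, padicNorm.mul, hx, hy, mul_one, div_one,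
    ← padicNorm.neg, neg_sub]

theorem div_left (hr : 0 < r) (h : RatCongr p r x y) (hy : padicNorm p y = 1)
    (hz : padicNorm p z ≤ 1) :
    RatCongr p r (z / x) (z / y) := by
  simpa only [div_eq_mul_inv] using (h.inv hr hy).mul_left hz

end RatCongr

def coprimeCompositions (k m n : ℕ) : Finset (Fin k → ℕ) :=
  (Finset.Nat.antidiagonalTuple k n).filter (fun v => ∀ i, 0 < v i ∧ Nat.Coprime (v i) m)

section Compositions

variable {k m n N : ℕ}

theorem mem_coprimeCompositions {v : Fin k → ℕ} :
    v ∈ coprimeCompositions k m n ↔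
      ∑ i, v i = n ∧ ∀ i, 0 < v i ∧ Nat.Coprime (v i) m := by
  rw [coprimeCompositions, Finset.mem_filter, Finset.Nat.mem_antidiagonalTuple]

theorem Nat.coprime_add_iff_of_dvd (hN : m ∣ N) :
    Nat.Coprime (n + N) m ↔ Nat.Coprime n m := by
  obtain ⟨t, rfl⟩ := hN
  exact Nat.coprime_add_mul_left_left n m t

theorem Nat.coprime_sub_iff_of_dvd (hN : m ∣ N) (hn : n ≤ N) :
    Nat.Coprime (N - n) m ↔ Nat.Coprime n m := by
  rw [← ZMod.isUnit_iff_coprime, ← ZMod.isUnit_iff_coprime, Nat.cast_sub hn,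
    (ZMod.natCast_eq_zero_iff N m).2 hN, zero_sub, IsUnit.neg_iff]

theorem sum_filter_lt_coprimeCompositions_add {M : Type*} [AddCommMonoid M] (hN : m ∣ N)
    (i : Fin k) (f : (Fin k → ℕ) → M) :
    ∑ v ∈ (coprimeCompositions k m (n + N)).filter (fun v => N < v i), f v =
      ∑ w ∈ coprimeCompositions k m n, f (w + Pi.single i N) := by
  have sum_add_single (w : Fin k → ℕ) :
      ∑ j, (w + Pi.single i N : Fin k → ℕ) j = ∑ j, w j + N := by
    simp [Finset.sum_add_distrib]
  have sub_add_single (v : Fin k → ℕ) (hv : N ≤ v i) :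
      v - Pi.single i N + Pi.single i N = v := by
    ext j
    rcases eq_or_ne j i with rfl | hj <;> simp [*]
  refine Finset.sum_nbij' (· - Pi.single i N) (· + Pi.single i N) ?_ ?_ ?_ (by simp) ?_
  · intro v hv
    simp only [Finset.mem_filter, mem_coprimeCompositions] at hv ⊢
    obtain ⟨⟨hsum, hcop⟩, hlt⟩ := hv
    refine ⟨?_, fun j => ?_⟩
    · rw [← sub_add_single v hlt.le, sum_add_single] at hsum
      omega
    · rcases eq_or_ne j i with rfl | hj
      · simp only [Pi.sub_apply, Pi.single_eq_same]
        rw [← Nat.coprime_add_iff_of_dvd hN, Nat.sub_add_cancel hlt.le]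
        exact ⟨by omega, (hcop j).2⟩
      · simpa [hj] using hcop j
  · intro w hw
    simp only [Finset.mem_filter, mem_coprimeCompositions] at hw ⊢
    obtain ⟨hsum, hcop⟩ := hw
    refine ⟨⟨by rw [sum_add_single, hsum], fun j => ?_⟩, by simpa using (hcop i).1⟩
    rcases eq_or_ne j i with rfl | hj
    · simp only [Pi.add_apply, Pi.single_eq_same, Nat.coprime_add_iff_of_dvd hN]
      exact ⟨by have := (hcop j).1; omega, (hcop j).2⟩
    · simpa [hj] using hcop j
  · intro v hv
    simp only [Finset.mem_filter] at hv
    exact sub_add_single v hv.2.le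
  · intro v hv
    simp only [Finset.mem_filter] at hv
    rw [sub_add_single v hv.2.le]

theorem sum_filter_forall_lt_coprimeCompositions_two_mul {M : Type*} [AddCommMonoid M]
    (hN : m ∣ N) (f : (Fin 3 → ℕ) → M) :
    ∑ v ∈ (coprimeCompositions 3 m (2 * N)).filter (fun v => ∀ i, v i < N), f v =
      ∑ w ∈ coprimeCompositions 3 m N, f (fun i => N - w i) := by
  refine Finset.sum_nbij' (fun v i => N - v i) (fun w i => N - w i) ?_ ?_ ?_ ?_ ?_
  · intro v hv
    simp only [Finset.mem_filter, mem_coprimeCompositions, Fin.sum_univ_three] at hv ⊢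
    obtain ⟨⟨hsum, hcop⟩, hlt⟩ := hv
    have := hlt 0; have := hlt 1; have := hlt 2
    refine ⟨by omega, fun j => ?_⟩
    rw [Nat.coprime_sub_iff_of_dvd hN (hlt j).le]
    exact ⟨Nat.sub_pos_of_lt (hlt j), (hcop j).2⟩
  · intro w hw
    simp only [Finset.mem_filter, mem_coprimeCompositions, Fin.sum_univ_three] at hw ⊢
    obtain ⟨hsum, hcop⟩ := hw
    have := (hcop 0).1; have := (hcop 1).1; have := (hcop 2).1
    have hlt (j : Fin 3) : w j < N := by fin_cases j <;> simp <;> omega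
    refine ⟨⟨by omega, fun j => ?_⟩, fun j => Nat.sub_lt (by omega) (hcop j).1⟩
    rw [Nat.coprime_sub_iff_of_dvd hN (hlt j).le]
    exact ⟨Nat.sub_pos_of_lt (hlt j), (hcop j).2⟩
  · intro v hv
    simp only [Finset.mem_filter] at hv
    exact funext fun j => Nat.sub_sub_self (hv.2 j).le
  · intro w hw
    simp only [mem_coprimeCompositions, Fin.sum_univ_three] at hw
    ext j; fin_cases j <;> simp <;> omega
  · intro v hv
    simp only [Finset.mem_filter] at hv
    congr 1; exact funext fun j => (Nat.sub_sub_self (hv.2 j).le).symm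

theorem sum_coprimeCompositions_two_mul {M : Type*} [AddCommMonoid M] (hm : m ≠ 1)
    (hN : m ∣ N) (f : (Fin 3 → ℕ) → M) :
    ∑ v ∈ coprimeCompositions 3 m (2 * N), f v =
      ∑ w ∈ coprimeCompositions 3 m N,
        (∑ i, f (w + Pi.single i N) + f (fun i => N - w i)) := by
  have hsplit : ∑ v ∈ coprimeCompositions 3 m (2 * N), f v =
      ∑ i, ∑ v ∈ (coprimeCompositions 3 m (2 * N)).filter (fun v => N < v i), f v +
        ∑ v ∈ (coprimeCompositions 3 m (2 * N)).filter (fun v => ∀ i, v i < N), f v := by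
    simp only [Finset.sum_filter]
    rw [Finset.sum_comm, ← Finset.sum_add_distrib]
    refine Finset.sum_congr rfl fun v hv => ?_
    obtain ⟨hsum, hcop⟩ := mem_coprimeCompositions.1 hv
    have hne (i : Fin 3) : v i ≠ N := fun h => hm ((h ▸ (hcop i).2).symm.eq_one_of_dvd hN)
    have := hne 0; have := hne 1; have := hne 2
    simp only [Fin.sum_univ_three, Fin.forall_fin_succ, Fin.succ_zero_eq_one,
      Fin.succ_one_eq_two, IsEmpty.forall_iff, and_true] at hsum ⊢
    split_ifs <;> first | omega | simp
  have hshift (i : Fin 3) := sum_filter_lt_coprimeCompositions_add (n := N) hN i f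
  simp only [← two_mul] at hshift
  rw [hsplit, sum_filter_forall_lt_coprimeCompositions_two_mul hN]
  simp only [hshift]
  rw [Finset.sum_comm, ← Finset.sum_add_distrib]

end Compositions

theorem ratCongr_shifted_reciprocals {p r : ℕ} [Fact p.Prime] (hr : 0 < r) {a b c : ℕ}
    (ha : ¬p ∣ a) (hb : ¬p ∣ b) (hc : ¬p ∣ c) {s : ℚ} (hs : padicNorm p s ≤ 1) :
    RatCongr p r
      (-s / ((a + (p : ℚ) ^ r) * b * c) + s / (a * (b + (p : ℚ) ^ r) * c) +
        s / (a * b * (c + (p : ℚ) ^ r)) +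
        -s / (((p : ℚ) ^ r - a) * ((p : ℚ) ^ r - b) * ((p : ℚ) ^ r - c)))
      (2 * (s / (a * b * c))) := by
  have habc : padicNorm p ((a : ℚ) * b * c) = 1 := by
    simp only [padicNorm.mul, (padicNorm.nat_eq_one_iff _).2, ha, hb, hc, not_false_eq_true,
      mul_one]
  have hs' : padicNorm p (-s) ≤ 1 := by rwa [padicNorm.neg]
  have h0 := (RatCongr.of_sub_eq_pow_mul (b * c) (x := (a + (p : ℚ) ^ r) * b * c)
    (by push_cast; ring)).div_left hr habc hs'
  have h1 := (RatCongr.of_sub_eq_pow_mul (a * c) (x := a * (b + (p : ℚ) ^ r) * c)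
    (by push_cast; ring)).div_left hr habc hs
  have h2 := (RatCongr.of_sub_eq_pow_mul (a * b) (x := a * b * (c + (p : ℚ) ^ r))
    (by push_cast; ring)).div_left hr habc hs
  have h3 := (RatCongr.of_sub_eq_pow_mul
    ((p : ℤ) ^ r * (p ^ r - a - b - c) + (a * b + b * c + c * a))
    (x := ((p : ℚ) ^ r - a) * ((p : ℚ) ^ r - b) * ((p : ℚ) ^ r - c)) (y := -(a * b * c))
    (by push_cast; ring)).div_left hr (by rwa [padicNorm.neg]) hs'
  convert ((h0.add h1).add h2).add h3 using 1
  rw [neg_div_neg_eq]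
  ring

def alternatingTerm (v : Fin 3 → ℕ) : ℚ :=
  (-1 : ℚ) ^ (v 0) / ((v 0 : ℚ) * (v 1 : ℚ) * (v 2 : ℚ))

theorem neg_one_pow_sub_eq_neg_one_pow_add {R : Type*} [Ring R] {a n : ℕ} (h : a ≤ n) :
    (-1 : R) ^ (n - a) = (-1) ^ (n + a) := by
  simp [show n + a = n - a + 2 * a by omega, pow_add, pow_mul]

theorem ratCongr_alternatingTerm_shifts {p r : ℕ} [hp : Fact p.Prime] (hodd : Odd p)
    (hr : 0 < r) {w : Fin 3 → ℕ} (hw : w ∈ coprimeCompositions 3 p (p ^ r)) :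
    RatCongr p r
      (∑ i, alternatingTerm (w + Pi.single i (p ^ r)) + alternatingTerm (fun i => p ^ r - w i))
      (2 * alternatingTerm w) := by
  obtain ⟨hsum, hcop⟩ := mem_coprimeCompositions.1 hw
  rw [Fin.sum_univ_three] at hsum
  have hndvd (i : Fin 3) : ¬p ∣ w i := (hp.out.coprime_iff_not_dvd).1 (hcop i).2.symm
  have hs : padicNorm p ((-1 : ℚ) ^ w 0) ≤ 1 := by
    exact_mod_cast padicNorm.of_int (p := p) ((-1) ^ w 0)
  convert ratCongr_shifted_reciprocals hr (hndvd 0) (hndvd 1) (hndvd 2) hs using 1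
  · simp [alternatingTerm, Fin.sum_univ_three, pow_add, (hodd.pow (n := r)).neg_one_pow,
      neg_one_pow_sub_eq_neg_one_pow_add (show w 0 ≤ p ^ r by omega), Nat.cast_sub,
      show w 1 ≤ p ^ r by omega, show w 2 ≤ p ^ r by omega, show w 0 ≤ p ^ r by omega]
  · rfl

theorem alt_three_sum_two_p_pow_congr_double (p : ℕ) (hp : p.Prime) (hodd : Odd p)
    (r : ℕ) (hr : 0 < r) :
    RatCongr p r
      (∑ v ∈ (Finset.Nat.antidiagonalTuple 3 (2 * p ^ r)).filter
          (fun v => ∀ i, 0 < v i ∧ Nat.Coprime (v i) p),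
        (-1 : ℚ) ^ (v 0) / ((v 0 : ℚ) * (v 1 : ℚ) * (v 2 : ℚ)))
      (2 * ∑ v ∈ (Finset.Nat.antidiagonalTuple 3 (p ^ r)).filter
          (fun v => ∀ i, 0 < v i ∧ Nat.Coprime (v i) p),
        (-1 : ℚ) ^ (v 0) / ((v 0 : ℚ) * (v 1 : ℚ) * (v 2 : ℚ))) := by
  have := Fact.mk hp
  change RatCongr p r (∑ v ∈ coprimeCompositions 3 p (2 * p ^ r), alternatingTerm v)
    (2 * ∑ v ∈ coprimeCompositions 3 p (p ^ r), alternatingTerm v)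
  rw [sum_coprimeCompositions_two_mul hp.ne_one (dvd_pow_self p hr.ne'), Finset.mul_sum]
  exact RatCongr.sum _ fun w hw => ratCongr_alternatingTerm_shifts hodd hr hw
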